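/- Let A be a Banach algebra, B a Banach A-bimodule, and D : A → B* a continuous derivation. If the weak left topological center Z̃ˡ_{A**}(B**) equals all of B** (i.e., for every b'' ∈ B** the map a'' ↦ b''·a'' from A** to B** is weak*-to-weak continuous), then the second adjoint D'' : A** → B*** is a continuous derivation with respect to the first Arens product on A** and the induced A**-bimodule structure on B***. -/

import Mathlib

namespace NormedSpace

/-- The topological dual of a seminormed space `E` (as `NormedSpace.Dual` in the older Mathlib). -/
abbrev Dual (𝕜 : Type*) [NontriviallyNormedField 𝕜] (E : Type*) [SeminormedAddCommGroup E]
    [NormedSpace 𝕜 E] : Type _ := E →L[𝕜] 𝕜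

noncomputable instance (𝕜 : Type*) [NontriviallyNormedField 𝕜] (E : Type*) [SeminormedAddCommGroup E]
    [NormedSpace 𝕜 E] : NormedSpace 𝕜 (Dual 𝕜 E) := inferInstance

noncomputable instance (𝕜 : Type*) [NontriviallyNormedField 𝕜] (E : Type*) [SeminormedAddCommGroup E]
    [NormedSpace 𝕜 E] : SeminormedAddCommGroup (Dual 𝕜 E) := inferInstance

end NormedSpace

open NormedSpace ContinuousLinearMap

noncomputable section

section Core

variable (X Y Z : Type*)
  [NormedAddCommGroup X] [NormedSpace ℝ X]
  [NormedAddCommGroup Y] [NormedSpace ℝ Y]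
  [NormedAddCommGroup Z] [NormedSpace ℝ Z]

/-- The dual (adjoint) map of a continuous linear map. -/
def dualMapCLM (T : X →L[ℝ] Y) : Dual ℝ Y →L[ℝ] Dual ℝ X :=
  (ContinuousLinearMap.compSL X Y ℝ (RingHom.id ℝ) (RingHom.id ℝ)).flip T

variable {X Y Z}

/-- The adjoint of a continuous bilinear map `m : X × Y → Z`, as a bilinear map
`Z* × X → Y*`, `⟨adjBil m z' x, y⟩ = ⟨z', m x y⟩`. -/
def adjBil (m : X →L[ℝ] Y →L[ℝ] Z) : Dual ℝ Z →L[ℝ] X →L[ℝ] Dual ℝ Y :=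
  ((ContinuousLinearMap.compSL X (Y →L[ℝ] Z) (Dual ℝ Y) (RingHom.id ℝ) (RingHom.id ℝ)).flip m).comp
    (ContinuousLinearMap.compSL Y Z ℝ (RingHom.id ℝ) (RingHom.id ℝ))

/-- The first Arens extension of a continuous bilinear map `X × Y → Z`
to the biduals, `X** × Y** → Z**`. -/
def arensExt (m : X →L[ℝ] Y →L[ℝ] Z) :
    Dual ℝ (Dual ℝ X) →L[ℝ] Dual ℝ (Dual ℝ Y) →L[ℝ] Dual ℝ (Dual ℝ Z) :=
  adjBil (adjBil (adjBil m))

variable (E : Type*) [NormedAddCommGroup E] [NormedSpace ℝ E]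

/-- The weak-* topology on the bidual `E**`, i.e. the topology of pointwise
convergence on `E*`. -/
def weakStarTop : TopologicalSpace (Dual ℝ (Dual ℝ E)) :=
  ⨅ f : Dual ℝ E, TopologicalSpace.induced (fun F => F f) inferInstance

/-- The weak topology on the bidual `E**`, i.e. the topology of pointwise
convergence on `E***`. -/
def weakTop : TopologicalSpace (Dual ℝ (Dual ℝ E)) :=
  ⨅ Φ : Dual ℝ (Dual ℝ (Dual ℝ E)), TopologicalSpace.induced (fun F => Φ F) inferInstance

end Core

section Algebra

variable (A : Type*) [NonUnitalNormedRing A] [NormedSpace ℝ A]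
  [IsScalarTower ℝ A A] [SMulCommClass ℝ A A]

/-- The first Arens product on the bidual of a Banach algebra. -/
def arens1 : Dual ℝ (Dual ℝ A) →L[ℝ] Dual ℝ (Dual ℝ A) →L[ℝ] Dual ℝ (Dual ℝ A) :=
  arensExt (ContinuousLinearMap.mul ℝ A)

/-- The second Arens product on the bidual of a Banach algebra. -/
def arens2 (F G : Dual ℝ (Dual ℝ A)) : Dual ℝ (Dual ℝ A) :=
  arensExt ((ContinuousLinearMap.mul ℝ A).flip) G F

/-- The weak left topological center of `A**`: those `F` such that
`G ↦ F □ G` is weak-*-to-weak continuous. -/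
def weakLeftCenter : Set (Dual ℝ (Dual ℝ A)) :=
  { F | ∀ Φ : Dual ℝ (Dual ℝ (Dual ℝ A)),
      @Continuous _ _ (weakStarTop A) _ fun G => Φ (arens1 A F G) }

/-- The left topological center of `A**`: those `F` such that
`G ↦ F □ G` is weak-*-to-weak-* continuous. -/
def leftCenter : Set (Dual ℝ (Dual ℝ A)) :=
  { F | ∀ f : Dual ℝ A,
      @Continuous _ _ (weakStarTop A) _ fun G => arens1 A F G f }

end Algebra


/-! The derivation rule for `D` splits `D''(F □ G)(b'')` as `F` applied to the functional
`a ↦ G(D'(b''·a)) + G(b''·D a)` on `A`. The second summand is `D'(G·b'')`, giving `D''(F)(G·b'')`.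
The first is the restriction to `A` of `Φ = G ∘ D' ∘ (b''·-)`, which is weak*-continuous on `A**`
by the hypothesis on the topological centre; a weak*-continuous functional on a bidual is evaluation
at its restriction, so `F` takes the value `Φ F = D''(G)(b''·F)` there. -/

section WeakStar

variable {E : Type*} [NormedAddCommGroup E] [NormedSpace ℝ E]

theorem exists_eq_apply_of_continuous_weakStarTop (Φ : Dual ℝ (Dual ℝ (Dual ℝ E)))
    (hΦ : @Continuous _ _ (weakStarTop E) _ Φ) : ∃ f : Dual ℝ E, ∀ F, Φ F = F f := by
  let ev : Dual ℝ E →ₗ[ℝ] Dual ℝ (Dual ℝ E) →ₗ[ℝ] ℝ :=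
    (ContinuousLinearMap.coeLM ℝ).comp (inclusionInDoubleDual ℝ (Dual ℝ E)).toLinearMap
  have h := (LinearMap.mem_span_iff_continuous (f := ev) (Φ : Dual ℝ (Dual ℝ E) →ₗ[ℝ] ℝ)).2 hΦ
  rw [← LinearMap.coe_range, Submodule.span_eq] at h
  obtain ⟨f, hf⟩ := h
  exact ⟨f, fun F => (LinearMap.congr_fun hf F).symm⟩

theorem apply_eq_apply_comp_inclusionInDoubleDual_of_continuous_weakStarTop
    (Φ : Dual ℝ (Dual ℝ (Dual ℝ E))) (hΦ : @Continuous _ _ (weakStarTop E) _ Φ)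
    (F : Dual ℝ (Dual ℝ E)) : Φ F = F (Φ.comp (inclusionInDoubleDual ℝ E)) := by
  obtain ⟨f, hf⟩ := exists_eq_apply_of_continuous_weakStarTop Φ hΦ
  rw [hf]
  congr 1
  ext x
  exact (hf (inclusionInDoubleDual ℝ E x)).symm

end WeakStar

section Derivation

variable {A : Type*} [NonUnitalNormedRing A] [NormedSpace ℝ A]
  [IsScalarTower ℝ A A] [SMulCommClass ℝ A A]
  {B : Type*} [NormedAddCommGroup B] [NormedSpace ℝ B]
  {l : A →L[ℝ] B →L[ℝ] B} {r : B →L[ℝ] A →L[ℝ] B} {D : A →L[ℝ] Dual ℝ B}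

theorem adjBil_mul_dualMapCLM_apply_of_derivation
    (hD : ∀ a b : A, D (a * b) = (D b).comp (r.flip a) + (D a).comp (l b))
    (b'' : Dual ℝ (Dual ℝ B)) (a : A) :
    adjBil (mul ℝ A) (dualMapCLM A _ D b'') a =
      dualMapCLM A _ D (arensExt r b'' (inclusionInDoubleDual ℝ A a)) +
        adjBil (adjBil l) b'' (D a) := by
  ext b
  exact (congrArg b'' (hD a b)).trans (map_add b'' _ _)

theorem adjBil_adjBil_mul_dualMapCLM_apply_of_derivation
    (hD : ∀ a b : A, D (a * b) = (D b).comp (r.flip a) + (D a).comp (l b))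
    (G : Dual ℝ (Dual ℝ A)) (b'' : Dual ℝ (Dual ℝ B)) :
    adjBil (adjBil (mul ℝ A)) G (dualMapCLM A _ D b'') =
      ((G.comp (dualMapCLM A _ D)).comp (arensExt r b'')).comp (inclusionInDoubleDual ℝ A) +
        dualMapCLM A _ D (arensExt l G b'') := by
  ext a
  exact (congrArg G (adjBil_mul_dualMapCLM_apply_of_derivation hD b'' a)).trans (map_add G _ _)

end Derivation

theorem stmt11_general (A : Type*) [NonUnitalNormedRing A] [NormedSpace ℝ A]
    [IsScalarTower ℝ A A] [SMulCommClass ℝ A A]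
    (B : Type*) [NormedAddCommGroup B] [NormedSpace ℝ B]
    (l : A →L[ℝ] B →L[ℝ] B) (r : B →L[ℝ] A →L[ℝ] B)
    -- `Z̃ˡ_{A**}(B**) = B**`: for every `b''`, `F ↦ b'' ⋅ F` is weak-*-to-weak continuous
    (hcen : ∀ (b'' : Dual ℝ (Dual ℝ B)) (Φ : Dual ℝ (Dual ℝ (Dual ℝ B))),
      @Continuous _ _ (weakStarTop A) _ fun F => Φ (arensExt r b'' F))
    -- `D : A → B*` is a continuous derivation for the dual module actions
    (D : A →L[ℝ] Dual ℝ B)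
    (hD : ∀ a b : A, D (a * b) = (D b).comp (r.flip a) + (D a).comp (l b)) :
    -- then `D''` is a derivation `A** → B***`
    ∀ F G : Dual ℝ (Dual ℝ A),
      dualMapCLM (Dual ℝ (Dual ℝ B)) (Dual ℝ A) (dualMapCLM A (Dual ℝ B) D) (arens1 A F G) =
        (dualMapCLM (Dual ℝ (Dual ℝ B)) (Dual ℝ A) (dualMapCLM A (Dual ℝ B) D) G).comp
            ((arensExt r).flip F) +
        (dualMapCLM (Dual ℝ (Dual ℝ B)) (Dual ℝ A) (dualMapCLM A (Dual ℝ B) D) F).comp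
            (arensExt l G) := by
  intro F G
  ext b''
  set D' := dualMapCLM A (Dual ℝ B) D
  calc F (adjBil (adjBil (mul ℝ A)) G (D' b''))
      = F (((G.comp D').comp (arensExt r b'')).comp (inclusionInDoubleDual ℝ A)) +
          F (D' (arensExt l G b'')) := by
        rw [adjBil_adjBil_mul_dualMapCLM_apply_of_derivation hD, map_add]
    _ = G (D' (arensExt r b'' F)) + F (D' (arensExt l G b'')) := by
        rw [← apply_eq_apply_comp_inclusionInDoubleDual_of_continuous_weakStarTop _
          (hcen b'' (G.comp D'))]
        rfl

/-- if `Z̃ˡ_{A**}(B**) = B**` then the second adjoint of a continuous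
derivation `D : A → B*` is a derivation `D'' : A** → B***` (first Arens product on
`A**`, induced `A**`-bimodule structure on `B***`). -/
theorem stmt11 (A : Type*) [NonUnitalNormedRing A] [NormedSpace ℝ A]
    [IsScalarTower ℝ A A] [SMulCommClass ℝ A A] [CompleteSpace A]
    (B : Type*) [NormedAddCommGroup B] [NormedSpace ℝ B] [CompleteSpace B]
    (l : A →L[ℝ] B →L[ℝ] B) (r : B →L[ℝ] A →L[ℝ] B)
    (hl : ∀ (a b : A) (x : B), l (a * b) x = l a (l b x))
    (hr : ∀ (x : B) (a b : A), r (r x a) b = r x (a * b))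
    (hlr : ∀ (a : A) (x : B) (b : A), r (l a x) b = l a (r x b))
    -- `Z̃ˡ_{A**}(B**) = B**`: for every `b''`, `F ↦ b'' ⋅ F` is weak-*-to-weak continuous
    (hcen : ∀ (b'' : Dual ℝ (Dual ℝ B)) (Φ : Dual ℝ (Dual ℝ (Dual ℝ B))),
      @Continuous _ _ (weakStarTop A) _ fun F => Φ (arensExt r b'' F))
    -- `D : A → B*` is a continuous derivation for the dual module actions
    (D : A →L[ℝ] Dual ℝ B)
    (hD : ∀ a b : A, D (a * b) = (D b).comp (r.flip a) + (D a).comp (l b)) :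
    -- then `D''` is a derivation `A** → B***`
    ∀ F G : Dual ℝ (Dual ℝ A),
      dualMapCLM (Dual ℝ (Dual ℝ B)) (Dual ℝ A) (dualMapCLM A (Dual ℝ B) D) (arens1 A F G) =
        (dualMapCLM (Dual ℝ (Dual ℝ B)) (Dual ℝ A) (dualMapCLM A (Dual ℝ B) D) G).comp
            ((arensExt r).flip F) +
        (dualMapCLM (Dual ℝ (Dual ℝ B)) (Dual ℝ A) (dualMapCLM A (Dual ℝ B) D) F).comp
            (arensExt l G) :=
  stmt11_general A B l r hcen D hD
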